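/- For all integers n ≥ 0 and i ≥ 1, ā_{2i}(2n) ≡ ā_{2i}(n) (mod 4). -/

import Mathlib

/-- `fk k` is the infinite product `∏_{n ≥ 1} (1 - q^{k n})` in `ℤ[[q]]`, defined
coefficientwise via stable partial products. -/
noncomputable def fk (k : ℕ) : PowerSeries ℤ :=
  PowerSeries.mk fun n =>
    PowerSeries.coeff n
      (∏ m ∈ Finset.Icc 1 (n + 1), (1 - (PowerSeries.X : PowerSeries ℤ) ^ (k * m)))

/-- `a : ℕ → ℕ` is the generalized overcubic partition function `ā_c`, i.e.
`(∑_{n≥0} ā_c(n) q^n) · f_1^2 · f_2^{2c} = f_2^3 · f_4^{c-1}` in `ℤ[[q]]`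
(equivalently `∑_{n≥0} ā_c(n) q^n = f_4^{c-1}/(f_1^2 f_2^{2c-3})`). -/
def IsGenOvercubic (c : ℕ) (a : ℕ → ℕ) : Prop :=
  (PowerSeries.mk fun n => (a n : ℤ)) * (fk 1) ^ 2 * (fk 2) ^ (2 * c) =
    (fk 2) ^ 3 * (fk 4) ^ (c - 1)

/-!
Modulo 4 we have `f₂⁴ ≡ f₄²`, so for every `i` the generating function of `ā_{2i}` is congruent to
`G = f₁(-q)/f₁(q) = f₂³/(f₁² f₄)`, and it suffices to show that the even part `P` of `G`, given by
`2P(q²) = G(q) + G(-q)`, is congruent to `G` modulo 4. Writing `f₁(q) + f₁(-q) = 2u(q²)`, the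
identity `f₁(q) f₁(-q) f₄ = f₂³` yields the exact identity
`(P(q²) - G(q²)) f₂³ f₈ = 2 (u(q²)² f₄ f₈ - u(q⁴) f₂² f₈)`,
whose right-hand side vanishes modulo 4 because `F(q)² ≡ F(q²)` modulo 2 for every `F`.
-/

open PowerSeries

local notation "ρ[" m "]" => PowerSeries.map (Int.castRingHom (ZMod m))

local notation "ex2" => PowerSeries.expand 2 two_ne_zero

section XAdic

variable {R : Type*} [CommRing R]

theorem smodEq_X_pow_iff {n : ℕ} {F G : R⟦X⟧} :
    F ≡ G [SMOD Ideal.span {(X : R⟦X⟧) ^ n}] ↔ ∀ m < n, coeff m F = coeff m G := by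
  simp only [SModEq.sub_mem, Ideal.mem_span_singleton, X_pow_dvd_iff, map_sub, sub_eq_zero]

theorem eq_of_forall_smodEq_X_pow {F G : R⟦X⟧}
    (h : ∀ n, F ≡ G [SMOD Ideal.span {(X : R⟦X⟧) ^ n}]) : F = G :=
  ext fun n => smodEq_X_pow_iff.mp (h (n + 1)) n n.lt_succ_self

theorem SModEq.map_of_X_pow_dvd {n : ℕ} {F G : R⟦X⟧} (f : R⟦X⟧ →+* R⟦X⟧)
    (hf : (X : R⟦X⟧) ^ n ∣ f (X ^ n)) (h : F ≡ G [SMOD Ideal.span {(X : R⟦X⟧) ^ n}]) :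
    f F ≡ f G [SMOD Ideal.span {(X : R⟦X⟧) ^ n}] := by
  rw [SModEq.sub_mem, Ideal.mem_span_singleton] at h ⊢
  exact hf.trans (map_sub f F G ▸ map_dvd f h)

theorem SModEq.expand {n : ℕ} {F G : R⟦X⟧} (h : F ≡ G [SMOD Ideal.span {(X : R⟦X⟧) ^ n}]) :
    ex2 F ≡ ex2 G [SMOD Ideal.span {(X : R⟦X⟧) ^ n}] :=
  h.map_of_X_pow_dvd _ <| by
    change (X : R⟦X⟧) ^ n ∣ ex2 ((X : R⟦X⟧) ^ n)
    rw [map_pow, expand_X, ← pow_mul]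
    exact pow_dvd_pow _ (by omega)

theorem SModEq.rescale {n : ℕ} {F G : R⟦X⟧} (a : R)
    (h : F ≡ G [SMOD Ideal.span {(X : R⟦X⟧) ^ n}]) :
    rescale a F ≡ rescale a G [SMOD Ideal.span {(X : R⟦X⟧) ^ n}] :=
  h.map_of_X_pow_dvd _ <| by
    rw [map_pow, rescale_X, mul_pow]
    exact dvd_mul_left _ _

end XAdic

section PartialProduct

variable (R : Type*) [CommRing R]

noncomputable def eulerPartialProd (k N : ℕ) : R⟦X⟧ := ∏ m ∈ Finset.Icc 1 N, (1 - X ^ (k * m))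

variable {R}

theorem eulerPartialProd_succ (k N : ℕ) :
    eulerPartialProd R k (N + 1) = eulerPartialProd R k N * (1 - X ^ (k * (N + 1))) :=
  Finset.prod_Icc_succ_top (by omega) _

theorem eulerPartialProd_smodEq {k M N : ℕ} (hk : 0 < k) (h : M ≤ N) :
    eulerPartialProd R k N ≡ eulerPartialProd R k M
      [SMOD Ideal.span {(X : R⟦X⟧) ^ (M + 1)}] := by
  induction N, h using Nat.le_induction with
  | base => rfl
  | succ N hMN ih =>
    have hfactor :
        (1 - X ^ (k * (N + 1)) : R⟦X⟧) ≡ 1 [SMOD Ideal.span {(X : R⟦X⟧) ^ (M + 1)}] := by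
      rw [SModEq.sub_mem, sub_sub_cancel_left, neg_mem_iff, Ideal.mem_span_singleton]
      exact pow_dvd_pow _ (by nlinarith)
    rw [eulerPartialProd_succ]
    exact (SModEq.rfl.mul hfactor).trans (by rwa [mul_one])

theorem expand_eulerPartialProd (k N : ℕ) :
    ex2 (eulerPartialProd R k N) = eulerPartialProd R (2 * k) N := by
  simp [eulerPartialProd, map_prod, expand_X, ← pow_mul, mul_assoc]

theorem eulerPartialProd_mul_rescale_mul (N : ℕ) :
    eulerPartialProd R 1 (2 * N) * rescale (-1) (eulerPartialProd R 1 (2 * N)) *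
        eulerPartialProd R 4 N =
      eulerPartialProd R 2 (2 * N) * eulerPartialProd R 2 N ^ 2 := by
  induction N with
  | zero => simp [eulerPartialProd]
  | succ N ih =>
    rw [show 2 * (N + 1) = 2 * N + 1 + 1 by ring]
    simp only [eulerPartialProd_succ, map_mul, map_sub, map_one, map_pow, rescale_neg_one_X]
    rw [(show Odd (1 * (2 * N + 1)) by simp).neg_pow,
      (show Even (1 * (2 * N + 1 + 1)) by simp [parity_simps]).neg_pow]
    linear_combination (1 - X ^ (4 * N + 2)) * (1 - X ^ (2 * N + 2)) ^ 2 *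
      (1 - X ^ (4 * N + 4)) * ih

end PartialProduct

section InfiniteProduct

theorem coeff_fk {k n M : ℕ} (hk : 0 < k) (h : n ≤ M) :
    coeff n (fk k) = coeff n (eulerPartialProd ℤ k M) := by
  have hstable : ∀ N, n ≤ N →
      coeff n (eulerPartialProd ℤ k N) = coeff n (eulerPartialProd ℤ k n) := fun N hN =>
    smodEq_X_pow_iff.mp (eulerPartialProd_smodEq hk hN) n n.lt_succ_self
  rw [fk, coeff_mk]
  exact (hstable (n + 1) n.le_succ).trans (hstable M h).symm

theorem fk_smodEq {k N M : ℕ} (hk : 0 < k) (h : N ≤ M) :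
    fk k ≡ eulerPartialProd ℤ k M [SMOD Ideal.span {(X : ℤ⟦X⟧) ^ N}] :=
  smodEq_X_pow_iff.mpr fun _ hm => coeff_fk hk (by omega)

theorem isUnit_fk {k : ℕ} (hk : 0 < k) : IsUnit (fk k) := by
  rw [isUnit_iff_constantCoeff, ← coeff_zero_eq_constantCoeff_apply, coeff_fk hk le_rfl]
  simp [eulerPartialProd]

theorem expand_fk {k : ℕ} (hk : 0 < k) : ex2 (fk k) = fk (2 * k) :=
  eq_of_forall_smodEq_X_pow fun N =>
    (fk_smodEq hk le_rfl).expand.trans <| by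
      rw [expand_eulerPartialProd]
      exact (fk_smodEq (by omega) le_rfl).symm

theorem fk_mul_rescale_mul_fk_four : fk 1 * rescale (-1) (fk 1) * fk 4 = fk 2 ^ 3 :=
  eq_of_forall_smodEq_X_pow fun N => by
    have h1 := fk_smodEq (k := 1) one_pos (show N ≤ 2 * N by omega)
    have h2 := fk_smodEq (k := 2) two_pos (show N ≤ 2 * N by omega)
    have h2' := fk_smodEq (k := 2) two_pos (le_refl N)
    have h4 := fk_smodEq (k := 4) four_pos (le_refl N)
    rw [pow_succ']
    refine ((h1.mul (h1.rescale (-1))).mul h4).trans ?_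
    rw [eulerPartialProd_mul_rescale_mul]
    exact (h2.mul (h2'.pow 2)).symm

end InfiniteProduct

section Congruences

theorem pow_char_eq_expand {p : ℕ} [Fact p.Prime] (F : (ZMod p)⟦X⟧) :
    F ^ p = expand p (NeZero.ne p) F := by
  rw [← MvPowerSeries.map_frobenius_expand p (NeZero.ne p) (f := F), ZMod.frobenius_zmod]
  rfl

theorem map_sq_eq_map_expand (F : ℤ⟦X⟧) : ρ[2] (F ^ 2) = ρ[2] (ex2 F) := by
  rw [map_pow, map_expand, pow_char_eq_expand]

theorem map_add_mul_self (m : ℕ) (F H : ℤ⟦X⟧) : ρ[m] (F + m * H) = ρ[m] F := by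
  rw [map_add, map_mul, map_natCast, ← map_natCast C, ZMod.natCast_self, map_zero, zero_mul,
    add_zero]

theorem exists_eq_add_mul_of_map_eq {m : ℕ} {F G : ℤ⟦X⟧} (h : ρ[m] F = ρ[m] G) :
    ∃ H, F = G + m * H := by
  refine ⟨mk fun n => (coeff n F - coeff n G) / m, ext fun n => ?_⟩
  have hdvd : (m : ℤ) ∣ coeff n F - coeff n G := by
    have := congrArg (coeff n) h
    rwa [coeff_map, coeff_map, eq_intCast, eq_intCast, eq_comm,
      ZMod.intCast_eq_intCast_iff_dvd_sub] at this
  rw [map_add, ← map_natCast C, coeff_C_mul, coeff_mk, Int.mul_ediv_cancel' hdvd]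
  ring

theorem map_four_two_mul_eq {F G : ℤ⟦X⟧} (h : ρ[2] F = ρ[2] G) :
    ρ[4] (2 * F) = ρ[4] (2 * G) := by
  obtain ⟨H, rfl⟩ := exists_eq_add_mul_of_map_eq h
  rw [← map_add_mul_self 4 (2 * G) H]
  congr 1
  push_cast
  ring

theorem map_four_sq_eq {F G : ℤ⟦X⟧} (h : ρ[2] F = ρ[2] G) :
    ρ[4] (F ^ 2) = ρ[4] (G ^ 2) := by
  obtain ⟨H, rfl⟩ := exists_eq_add_mul_of_map_eq h
  rw [← map_add_mul_self 4 (G ^ 2) (G * H + H ^ 2)]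
  congr 1
  push_cast
  ring

end Congruences

section EvenPart

variable {R S : Type*} [CommRing R] [CommRing S]

noncomputable def evenPart (F : R⟦X⟧) : R⟦X⟧ := mk fun n => coeff (2 * n) F

theorem map_evenPart (f : R →+* S) (F : R⟦X⟧) : map f (evenPart F) = evenPart (map f F) := by
  ext n
  simp [evenPart]

theorem rescale_neg_one_rescale_neg_one (F : R⟦X⟧) : rescale (-1) (rescale (-1) F) = F := by
  rw [rescale_rescale, neg_one_mul, neg_neg, rescale_one, RingHom.id_apply]

theorem add_rescale_neg_one (F : R⟦X⟧) : F + rescale (-1) F = 2 * ex2 (evenPart F) := by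
  ext n
  rw [map_add, coeff_rescale, ← map_ofNat C, coeff_C_mul, coeff_expand]
  rcases Nat.even_or_odd' n with ⟨m, rfl | rfl⟩
  · rw [if_pos (dvd_mul_right 2 m), Nat.mul_div_cancel_left m two_pos, evenPart, coeff_mk,
      pow_mul, neg_one_sq, one_pow]
    ring
  · simp [pow_succ, pow_mul, Nat.not_two_dvd_bit1]

theorem expand_injective {p : ℕ} (hp : p ≠ 0) :
    Function.Injective (expand p hp : R⟦X⟧ →ₐ[R] R⟦X⟧) := fun F G h =>
  ext fun n => by simpa only [coeff_expand_mul] using congrArg (coeff (p * n)) h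

end EvenPart

section Overcubic

theorem map_four_eq_of_isGenOvercubic {i : ℕ} (hi : 1 ≤ i) {a : ℕ → ℕ}
    (ha : IsGenOvercubic (2 * i) a) {G : ℤ⟦X⟧} (hG : rescale (-1) (fk 1) = fk 1 * G) :
    ρ[4] (mk fun n => (a n : ℤ)) = ρ[4] G := by
  obtain ⟨j, rfl⟩ : ∃ j, i = j + 1 := ⟨i - 1, by omega⟩
  have h24 : ρ[4] (fk 2) ^ (4 * j + 4) = ρ[4] (fk 4) ^ (2 * j + 2) := by
    have h := map_four_sq_eq ((map_sq_eq_map_expand (fk 2)).trans (by rw [expand_fk two_pos]))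
    simp only [map_pow, ← pow_mul] at h
    rw [show 4 * j + 4 = 2 * 2 * (j + 1) by ring, show 2 * j + 2 = 2 * (j + 1) by ring,
      pow_mul, h, ← pow_mul]
    rfl
  have hu : IsUnit (ρ[4] (fk 1) ^ 2 * ρ[4] (fk 4) ^ (2 * j + 2)) :=
    (((isUnit_fk one_pos).map _).pow 2).mul (((isUnit_fk four_pos).map _).pow _)
  rw [IsGenOvercubic, show 2 * (2 * (j + 1)) = 4 * j + 4 by ring,
    show 2 * (j + 1) - 1 = 2 * j + 1 by omega] at ha
  have hgauss := congrArg ρ[4] fk_mul_rescale_mul_fk_four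
  replace ha := congrArg ρ[4] ha
  replace hG := congrArg ρ[4] hG
  simp only [map_mul, map_pow] at ha hgauss hG ⊢
  refine hu.mul_right_cancel ?_
  linear_combination ha - ρ[4] (mk fun n => (a n : ℤ)) * ρ[4] (fk 1) ^ 2 * h24
    - ρ[4] (fk 4) ^ (2 * j + 1) * hgauss + ρ[4] (fk 1) * ρ[4] (fk 4) ^ (2 * j + 2) * hG

theorem expand_evenPart_identity {G : ℤ⟦X⟧} (hG : rescale (-1) (fk 1) = fk 1 * G) :
    ex2 (evenPart G) * (fk 2 ^ 3 * fk 8) + 2 * (ex2 (ex2 (evenPart (fk 1))) * fk 2 ^ 2 * fk 8) =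
      ex2 G * (fk 2 ^ 3 * fk 8) + 2 * (ex2 (evenPart (fk 1)) ^ 2 * fk 4 * fk 8) := by
  have hG' : fk 1 = rescale (-1) (fk 1) * rescale (-1) G := by
    simpa only [map_mul, rescale_neg_one_rescale_neg_one] using congrArg (rescale (-1)) hG
  set E := rescale (-1) (fk 1)
  set u := ex2 (evenPart (fk 1))
  set P := ex2 (evenPart G)
  have hG_even : G + rescale (-1) G = 2 * P := add_rescale_neg_one G
  have hf_even : fk 1 + E = 2 * u := add_rescale_neg_one (fk 1)
  have hgauss : fk 1 * E * fk 4 = fk 2 ^ 3 := fk_mul_rescale_mul_fk_four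
  have hP : P * fk 2 ^ 3 = 2 * u ^ 2 * fk 4 - fk 2 ^ 3 := by
    have h2 : (2 : ℤ⟦X⟧) ≠ 0 := fun h => by simpa [map_ofNat] using congrArg constantCoeff h
    refine mul_left_cancel₀ h2 ?_
    linear_combination -(2 * P + 2) * hgauss - fk 1 * E * fk 4 * hG_even - E * fk 4 * hG
      - fk 1 * fk 4 * hG' + fk 4 * (fk 1 + E + 2 * u) * hf_even
  have hf₁ : fk 1 ^ 2 * fk 4 + fk 2 ^ 3 = 2 * (fk 1 * fk 4 * u) := by
    linear_combination fk 1 * fk 4 * hf_even - hgauss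
  have hf₂ : fk 2 ^ 2 * fk 8 + fk 4 ^ 3 = 2 * (fk 2 * fk 8 * ex2 u) := by
    simpa [expand_fk, map_ofNat] using congrArg ex2 hf₁
  have hgauss₂ : fk 2 * ex2 E * fk 8 = fk 4 ^ 3 := by
    simpa [expand_fk] using congrArg ex2 hgauss
  have hG₂ : ex2 E = fk 2 * ex2 G := by
    simpa [expand_fk] using congrArg ex2 hG
  linear_combination fk 8 * hP - fk 2 * hf₂ - fk 2 * hgauss₂ + fk 2 ^ 2 * fk 8 * hG₂

theorem map_four_evenPart_eq {G : ℤ⟦X⟧} (hG : rescale (-1) (fk 1) = fk 1 * G) :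
    ρ[4] (evenPart G) = ρ[4] G := by
  have hmod2 : ρ[2] (ex2 (evenPart (fk 1)) ^ 2 * fk 4 * fk 8) =
      ρ[2] (ex2 (ex2 (evenPart (fk 1))) * fk 2 ^ 2 * fk 8) := by
    rw [map_mul, map_mul, map_sq_eq_map_expand, map_mul, map_mul (ρ[2]) (ex2 _),
      map_sq_eq_map_expand, expand_fk two_pos]
    rfl
  have h := congrArg ρ[4] (expand_evenPart_identity hG)
  rw [map_add, map_add, map_four_two_mul_eq hmod2, add_left_inj, map_mul,
    map_mul ρ[4] (ex2 G)] at h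
  have hu : IsUnit (ρ[4] (fk 2 ^ 3 * fk 8)) :=
    (((isUnit_fk two_pos).pow 3).mul (isUnit_fk (by norm_num))).map _
  apply expand_injective two_ne_zero
  rw [← map_expand, ← map_expand]
  exact hu.mul_right_cancel h

theorem map_four_evenPart_eq_of_isGenOvercubic {i : ℕ} (hi : 1 ≤ i) {a : ℕ → ℕ}
    (ha : IsGenOvercubic (2 * i) a) :
    ρ[4] (evenPart (mk fun n => (a n : ℤ))) = ρ[4] (mk fun n => (a n : ℤ)) := by
  obtain ⟨G, hG⟩ := (isUnit_fk one_pos).dvd (a := rescale (-1) (fk 1))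
  rw [map_evenPart, map_four_eq_of_isGenOvercubic hi ha hG, ← map_evenPart,
    map_four_evenPart_eq hG]

end Overcubic

theorem stmt_19 (i : ℕ) (hi : 1 ≤ i) (ab : ℕ → ℕ) (hab : IsGenOvercubic (2 * i) ab)
    (n : ℕ) :
    ab (2 * n) ≡ ab n [MOD 4] := by
  have h := congrArg (coeff n) (map_four_evenPart_eq_of_isGenOvercubic hi hab)
  simp only [coeff_map, evenPart, coeff_mk, eq_intCast, Int.cast_natCast] at h
  exact (ZMod.natCast_eq_natCast_iff _ _ _).mp h
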